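/- arXiv:1301.3488 — 2 statements merged into one kernel-verified Lean document; each statement's English description precedes it below -/
import Mathlib

section
/- For all 1 ≤ i ≤ j ≤ n, there is at most one maximal location ⟨k,l⟩ of s with k ≤ i ≤ j ≤ l and C_s(k,l) = C_s(i,j). (Hence the maximal location Extend_s(i,j) extending an interval while keeping its fingerprint is unique.) -/
/-- The fingerprint `C_s(i,j)`: the set of distinct letters occurring in `s_i … s_j`. -/
def fingerprint {α : Type*} [DecidableEq α] (s : ℕ → α) (i j : ℕ) : Finset α :=
  (Finset.Icc i j).image s

/-- `⟨i,j⟩` is a maximal location of the sequence `s_1 … s_n`. -/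
def IsMaxLoc {α : Type*} [DecidableEq α] (s : ℕ → α) (n i j : ℕ) : Prop :=
  1 ≤ i ∧ i ≤ j ∧ j ≤ n ∧
    (1 < i → s (i - 1) ∉ fingerprint s i j) ∧
    (j < n → s (j + 1) ∉ fingerprint s i j)


lemma mem_fingerprint {α : Type*} [DecidableEq α] (s : ℕ → α) {a b m : ℕ}
    (h1 : a ≤ m) (h2 : m ≤ b) : s m ∈ fingerprint s a b :=
  Finset.mem_image_of_mem s (Finset.mem_Icc.mpr ⟨h1, h2⟩)

lemma left_eq {α : Type*} [DecidableEq α]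
    (s : ℕ → α) (n i j : ℕ) (hij : i ≤ j)
    (k l k' l' : ℕ)
    (hml : IsMaxLoc s n k l) (hml' : IsMaxLoc s n k' l')
    (hk : k ≤ i) (hl : j ≤ l) (hk' : k' ≤ i) (hl' : j ≤ l')
    (hf : fingerprint s k l = fingerprint s i j)
    (hf' : fingerprint s k' l' = fingerprint s i j)
    (hkk : k ≤ k') : k = k' := by
  by_contra hne
  have hlt : k < k' := lt_of_le_of_ne hkk hne
  have h1k' : 1 < k' := lt_of_le_of_lt hml.1 hlt
  have hmem : s (k' - 1) ∈ fingerprint s k l :=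
    mem_fingerprint s (Nat.le_sub_one_of_lt hlt)
      (le_trans (Nat.sub_le k' 1) (le_trans hk' (le_trans hij hl)))
  rw [hf, ← hf'] at hmem
  exact hml'.2.2.2.1 h1k' hmem

lemma right_eq {α : Type*} [DecidableEq α]
    (s : ℕ → α) (n i j : ℕ) (hij : i ≤ j)
    (k l k' l' : ℕ)
    (hml : IsMaxLoc s n k l) (hml' : IsMaxLoc s n k' l')
    (hk : k ≤ i) (hl : j ≤ l) (hk' : k' ≤ i) (hl' : j ≤ l')
    (hf : fingerprint s k l = fingerprint s i j)
    (hf' : fingerprint s k' l' = fingerprint s i j)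
    (hll : l ≤ l') : l = l' := by
  by_contra hne
  have hlt : l < l' := lt_of_le_of_ne hll hne
  have hln : l < n := lt_of_lt_of_le hlt hml'.2.2.1
  have hmem : s (l + 1) ∈ fingerprint s k' l' :=
    mem_fingerprint s (le_trans hk' (le_trans hij (le_trans hl (Nat.le_succ l)))) hlt
  rw [hf', ← hf] at hmem
  exact hml.2.2.2.2 hln hmem

/-- There is at most one maximal location `⟨k,l⟩` extending an interval `[i,j]`
with the same fingerprint (so `Extend_s(i,j)` is unique). -/
theorem extend_maxLoc_unique {α : Type*} [DecidableEq α]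
    (s : ℕ → α) (n i j : ℕ) (h1 : 1 ≤ i) (hij : i ≤ j) (hjn : j ≤ n)
    (k l k' l' : ℕ)
    (hml : IsMaxLoc s n k l) (hml' : IsMaxLoc s n k' l')
    (hk : k ≤ i) (hl : j ≤ l) (hk' : k' ≤ i) (hl' : j ≤ l')
    (hf : fingerprint s k l = fingerprint s i j)
    (hf' : fingerprint s k' l' = fingerprint s i j) :
    k = k' ∧ l = l' := by
  constructor
  · rcases le_total k k' with h | h
    · exact left_eq s n i j hij k l k' l' hml hml' hk hl hk' hl' hf hf' h
    · exact (left_eq s n i j hij k' l' k l hml' hml hk' hl' hk hl hf' hf h).symm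
  · rcases le_total l l' with h | h
    · exact right_eq s n i j hij k l k' l' hml hml' hk hl hk' hl' hf hf' h
    · exact (right_eq s n i j hij k' l' k l hml' hml hk' hl' hk hl hf' hf h).symm
end

section
/- A maximal location of s is uniquely determined by its support and its O string: if ⟨i,j⟩ and ⟨k,l⟩ are maximal locations of s with Support(⟨i,j⟩) = Support(⟨k,l⟩) and O_s^{⟨i,j⟩} = O_s^{⟨k,l⟩}, then i = k and j = l. -/
/-- `fo_s(i,j)`: the string of the first occurrences of each distinct letter
encountered when reading `s_i … s_j` from left to right. -/
def fo {α : Type*} [DecidableEq α] (s : ℕ → α) (i j : ℕ) : List α :=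
  ((List.range' i (j + 1 - i)).filter
    (fun p => decide (∀ q ∈ Finset.Ico i p, s q ≠ s p))).map s

/-- `Support([i,j])`: the minimum over letters `a ∈ C_s(i,j)` of the position of
the rightmost occurrence of `a` in `s_i … s_j`. -/
noncomputable def support {α : Type*} [DecidableEq α] (s : ℕ → α) (i j : ℕ) : ℕ :=
  sInf {q | ∃ a ∈ fingerprint s i j, q = sSup {p | i ≤ p ∧ p ≤ j ∧ s p = a}}

/-- `O_s^{[i,j]} = fo_s(Support([i,j]), j)`. -/
noncomputable def Ostr {α : Type*} [DecidableEq α] (s : ℕ → α) (i j : ℕ) : List α :=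
  fo s (support s i j) j

/-- The substring `s_i … s_j` as a list. -/
def substr {α : Type*} (s : ℕ → α) (i j : ℕ) : List α :=
  (List.range' i (j + 1 - i)).map s

/-- The position of the next occurrence of `s_i` after position `i`, within the
extended sequence `s_1 … s_{n+1}`, and `n + 2` if there is none. -/
noncomputable def nxt {α : Type*} (s : ℕ → α) (n i : ℕ) : ℕ :=
  sInf ({j | i < j ∧ j ≤ n + 1 ∧ s j = s i} ∪ {n + 2})

/-- `lfo_s(i) = fo_s(i, j − 1)` where `j` is the minimal position with `i < j` and
`s_j = s_i` if it exists and `j = n + 2` otherwise, computed in the sequence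
extended by the sentinel `s_{n+1} = #`. -/
noncomputable def lfo {α : Type*} [DecidableEq α] (s : ℕ → α) (n i : ℕ) : List α :=
  fo s i (nxt s n i - 1)

lemma mem_fingerprint_s10 {α : Type*} [DecidableEq α] {s : ℕ → α} {i j : ℕ} {a : α} :
    a ∈ fingerprint s i j ↔ ∃ p, i ≤ p ∧ p ≤ j ∧ s p = a := by
  simp [fingerprint, Finset.mem_image, Finset.mem_Icc, and_assoc]

lemma support_spec {α : Type*} [DecidableEq α] (s : ℕ → α) {i j : ℕ} (h : i ≤ j) :
    i ≤ support s i j ∧ support s i j ≤ j ∧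
      fingerprint s (support s i j) j = fingerprint s i j := by
  have hT : ∀ a ∈ fingerprint s i j,
      sSup {p | i ≤ p ∧ p ≤ j ∧ s p = a} ∈ {p | i ≤ p ∧ p ≤ j ∧ s p = a} := by
    intro a ha
    obtain ⟨p, hp1, hp2, hp3⟩ := mem_fingerprint_s10.mp ha
    exact Nat.sSup_mem ⟨p, hp1, hp2, hp3⟩ ⟨j, fun x hx => hx.2.1⟩
  have hSne : {q | ∃ a ∈ fingerprint s i j, q = sSup {p | i ≤ p ∧ p ≤ j ∧ s p = a}}.Nonempty :=
    ⟨_, s i, mem_fingerprint_s10.mpr ⟨i, le_refl i, h, rfl⟩, rfl⟩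
  have hmem : support s i j ∈
      {q | ∃ a ∈ fingerprint s i j, q = sSup {p | i ≤ p ∧ p ≤ j ∧ s p = a}} :=
    Nat.sInf_mem hSne
  obtain ⟨a, ha, heq⟩ := hmem
  have hprops := hT a ha
  rw [← heq] at hprops
  refine ⟨hprops.1, hprops.2.1, ?_⟩
  apply Finset.Subset.antisymm
  · intro b hb
    obtain ⟨p, hp1, hp2, hp3⟩ := mem_fingerprint_s10.mp hb
    exact mem_fingerprint_s10.mpr ⟨p, le_trans hprops.1 hp1, hp2, hp3⟩
  · intro b hb
    have hTb := hT b hb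
    have hle : support s i j ≤ sSup {p | i ≤ p ∧ p ≤ j ∧ s p = b} :=
      Nat.sInf_le ⟨b, hb, rfl⟩
    exact mem_fingerprint_s10.mpr ⟨_, hle, hTb.2.1, hTb.2.2⟩

lemma fo_toFinset {α : Type*} [DecidableEq α] (s : ℕ → α) {i j : ℕ} (h : i ≤ j) :
    (fo s i j).toFinset = fingerprint s i j := by
  apply Finset.Subset.antisymm
  · intro a ha
    rw [List.mem_toFinset, fo, List.mem_map] at ha
    obtain ⟨q, hq, hqa⟩ := ha
    rw [List.mem_filter, List.mem_range'_1] at hq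
    exact mem_fingerprint_s10.mpr ⟨q, hq.1.1, by omega, hqa⟩
  · intro a ha
    obtain ⟨p, hp1, hp2, hp3⟩ := mem_fingerprint_s10.mp ha
    set T : Set ℕ := {p | i ≤ p ∧ p ≤ j ∧ s p = a} with hTdef
    have hne : T.Nonempty := ⟨p, hp1, hp2, hp3⟩
    have hmem : sInf T ∈ T := Nat.sInf_mem hne
    have hm1 : i ≤ sInf T := hmem.1
    have hm2 : sInf T ≤ j := hmem.2.1
    rw [List.mem_toFinset, fo, List.mem_map]
    refine ⟨sInf T, ?_, hmem.2.2⟩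
    rw [List.mem_filter, List.mem_range'_1]
    refine ⟨⟨hm1, by omega⟩, ?_⟩
    rw [decide_eq_true_iff]
    intro q hq hcontra
    rw [Finset.mem_Ico] at hq
    have : sInf T ≤ q := Nat.sInf_le ⟨hq.1, by omega, hcontra.trans hmem.2.2⟩
    omega

/-- A maximal location of `s` is uniquely determined by its support and its
`O` string. -/
theorem maxLoc_eq_of_support_Ostr_eq {α : Type*} [DecidableEq α]
    (s : ℕ → α) (n i j k l : ℕ)
    (h1 : IsMaxLoc s n i j) (h2 : IsMaxLoc s n k l)
    (hsup : support s i j = support s k l) (hO : Ostr s i j = Ostr s k l) :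
    i = k ∧ j = l := by
  obtain ⟨hi1, hij, hjn, hileft, hjright⟩ := h1
  obtain ⟨hk1, hkl, hln, hkleft, hlright⟩ := h2
  obtain ⟨hip, hpj, hfj⟩ := support_spec s hij
  obtain ⟨hkp, hpl, hfl⟩ := support_spec s hkl
  set p := support s i j with hp
  rw [← hsup] at hkp hpl hfl
  -- equal fingerprints
  have hfing : fingerprint s i j = fingerprint s k l := by
    rw [← hfj, ← hfl, ← fo_toFinset s hpj, ← fo_toFinset s hpl]
    have : fo s p j = fo s p l := by
      have := hO
      rw [Ostr, Ostr, ← hsup, ← hp] at this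
      exact this
    rw [this]
  -- j = l
  have hjl : j = l := by
    by_contra hne
    rcases Nat.lt_or_ge j l with hlt | hge
    · have hjn' : j < n := lt_of_lt_of_le hlt hln
      have : s (j + 1) ∈ fingerprint s k l :=
        mem_fingerprint_s10.mpr ⟨j + 1, by omega, by omega, rfl⟩
      exact hjright hjn' (hfing ▸ this)
    · have hlt : l < j := lt_of_le_of_ne hge (Ne.symm hne)
      have hln' : l < n := lt_of_lt_of_le hlt hjn
      have : s (l + 1) ∈ fingerprint s i j :=
        mem_fingerprint_s10.mpr ⟨l + 1, by omega, by omega, rfl⟩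
      exact hlright hln' (hfing ▸ this)
  subst hjl
  refine ⟨?_, rfl⟩
  by_contra hne
  rcases Nat.lt_or_ge i k with hlt | hge
  · have : s (k - 1) ∈ fingerprint s i j :=
      mem_fingerprint_s10.mpr ⟨k - 1, by omega, by omega, rfl⟩
    exact hkleft (by omega) (hfing ▸ this)
  · have hlt : k < i := lt_of_le_of_ne hge (Ne.symm hne)
    have : s (i - 1) ∈ fingerprint s k j :=
      mem_fingerprint_s10.mpr ⟨i - 1, by omega, by omega, rfl⟩
    exact hileft (by omega) (hfing ▸ this)
end
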